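/- Let l, m, and n be positive integers with m ≤ l ≤ n. Let A be a real m×n matrix of rank m admitting the singular value decomposition A = U Σ Vᵀ, where U is an m×m matrix with orthonormal columns, V is an n×m matrix with orthonormal columns, and Σ is an m×m diagonal matrix with nonnegative entries. Let G be a real n×l matrix such that the m×l matrix A G has rank m, and suppose P is a real m×m matrix and Q is a real l×m matrix with orthonormal columns such that A G = P Qᵀ. Then P is invertible, and the condition number of P⁻¹ A equals the condition number of Vᵀ G. -/

import Mathlib

open Matrix

/-- The Euclidean norm of a vector in `ℝᵏ`. -/
noncomputable def euclNorm {k : ℕ} (v : Fin k → ℝ) : ℝ :=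
  Real.sqrt (∑ i, v i ^ 2)

/-- The greatest singular value of a real `m × k` matrix `M` (`m ≤ k`):
`sup {‖Mᵀ y‖ : y ∈ ℝᵐ, ‖y‖ = 1}`. -/
noncomputable def sigmaMax {m k : ℕ} (M : Matrix (Fin m) (Fin k) ℝ) : ℝ :=
  sSup {x | ∃ y : Fin m → ℝ, euclNorm y = 1 ∧ x = euclNorm (Mᵀ.mulVec y)}

/-- The least (`m`-th greatest) singular value of a real `m × k` matrix `M`
(`m ≤ k`): `inf {‖Mᵀ y‖ : y ∈ ℝᵐ, ‖y‖ = 1}`. -/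
noncomputable def sigmaMin {m k : ℕ} (M : Matrix (Fin m) (Fin k) ℝ) : ℝ :=
  sInf {x | ∃ y : Fin m → ℝ, euclNorm y = 1 ∧ x = euclNorm (Mᵀ.mulVec y)}

/-- The condition number of a real `m × k` matrix (`m ≤ k`): the ratio of its
greatest singular value to its least singular value. -/
noncomputable def condNum {m k : ℕ} (M : Matrix (Fin m) (Fin k) ℝ) : ℝ :=
  sigmaMax M / sigmaMin M

/-
Write `A = M Vᵀ` with `M = U S`. Since `P` is invertible, `B := P⁻¹ M` satisfies `P⁻¹ A = B Vᵀ`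
and `B (Vᵀ G) = Qᵀ`; hence `Vᵀ G Q` is a right inverse of `B` and `Vᵀ G = B⁻¹ Qᵀ`. Multiplying
on the right by the transpose of a matrix with orthonormal columns does not change the values
`‖Mᵀ y‖` over unit vectors `y`, and passing to `B⁻¹` replaces these values by their reciprocals,
which exchanges the largest and the smallest. So both condition numbers equal that of `B`.
-/

open scoped Pointwise

-- Also true when `s` is empty or `sInf s = 0`: then both sides are `0` by the junk conventions.
lemma Real.sSup_inv_of_pos {s : Set ℝ} (hs : ∀ x ∈ s, 0 < x) : sSup s⁻¹ = (sInf s)⁻¹ := by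
  rcases s.eq_empty_or_nonempty with rfl | ⟨x₀, hx₀⟩
  · simp
  have hbdd : BddBelow s := ⟨0, fun x hx => (hs x hx).le⟩
  have upper_iff : ∀ b, b ∈ upperBounds s⁻¹ ↔ 0 < b ∧ b⁻¹ ∈ lowerBounds s := by
    refine fun b => ⟨fun hb => ?_, fun ⟨hb, hb'⟩ x hx => ?_⟩
    · have hb₀ : 0 < b := (inv_pos.mpr (hs x₀ hx₀)).trans_le (hb (Set.inv_mem_inv.mpr hx₀))
      exact ⟨hb₀, fun x hx => (inv_le_comm₀ (hs x hx) hb₀).mp (hb (Set.inv_mem_inv.mpr hx))⟩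
    · exact (inv_le_inv₀ hb (inv_pos.mp (hs _ hx))).mp (hb' hx)
  by_cases hpos : 0 < sInf s
  · refine IsLUB.csSup_eq ⟨?_, fun b hb => ?_⟩ ⟨x₀⁻¹, Set.inv_mem_inv.mpr hx₀⟩
    · exact (upper_iff _).mpr ⟨inv_pos.mpr hpos, by
        rw [inv_inv]; exact fun x hx => csInf_le hbdd hx⟩
    · obtain ⟨hb₀, hb'⟩ := (upper_iff b).mp hb
      exact (inv_le_comm₀ hpos hb₀).mpr (le_csInf ⟨x₀, hx₀⟩ hb')
  · have hzero : sInf s = 0 :=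
      le_antisymm (not_lt.mp hpos) (le_csInf ⟨x₀, hx₀⟩ fun x hx => (hs x hx).le)
    rw [hzero, _root_.inv_zero]
    refine Real.sSup_of_not_bddAbove fun ⟨b, hb⟩ => hpos ?_
    obtain ⟨hb₀, hb'⟩ := (upper_iff b).mp hb
    exact (inv_pos.mpr hb₀).trans_le (le_csInf ⟨x₀, hx₀⟩ hb')

lemma Matrix.isUnit_of_rank_eq {n K : Type*} [Fintype n] [DecidableEq n] [Field K]
    {P : Matrix n n K} (h : P.rank = Fintype.card n) : IsUnit P := by
  rw [← mulVec_surjective_iff_isUnit, ← Matrix.coe_mulVecLin, ← LinearMap.range_eq_top]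
  exact Submodule.eq_top_of_finrank_eq <| by
    rw [← Matrix.rank, h, Module.finrank_fintype_fun_eq_card]

section EuclNorm

variable {k : ℕ}

lemma euclNorm_eq_sqrt_dotProduct (v : Fin k → ℝ) : euclNorm v = √(v ⬝ᵥ v) := by
  simp only [euclNorm, dotProduct, sq]

lemma euclNorm_nonneg (v : Fin k → ℝ) : 0 ≤ euclNorm v := Real.sqrt_nonneg _

lemma euclNorm_eq_zero {v : Fin k → ℝ} : euclNorm v = 0 ↔ v = 0 := by
  rw [euclNorm_eq_sqrt_dotProduct,
    Real.sqrt_eq_zero (by simpa using dotProduct_self_star_nonneg v), dotProduct_self_eq_zero]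

lemma euclNorm_smul (c : ℝ) (v : Fin k → ℝ) : euclNorm (c • v) = |c| * euclNorm v := by
  rw [euclNorm_eq_sqrt_dotProduct, euclNorm_eq_sqrt_dotProduct, smul_dotProduct, dotProduct_smul,
    smul_eq_mul, smul_eq_mul, ← mul_assoc, Real.sqrt_mul (mul_self_nonneg c),
    Real.sqrt_mul_self_eq_abs]

lemma euclNorm_mulVec_of_transpose_mul_self {m : ℕ} {W : Matrix (Fin k) (Fin m) ℝ}
    (hW : Wᵀ * W = 1) (x : Fin m → ℝ) : euclNorm (W *ᵥ x) = euclNorm x := by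
  rw [euclNorm_eq_sqrt_dotProduct, euclNorm_eq_sqrt_dotProduct, dotProduct_mulVec,
    ← mulVec_transpose, mulVec_mulVec, hW, one_mulVec]

end EuclNorm

def unitSphereNorms {m k : ℕ} (M : Matrix (Fin m) (Fin k) ℝ) : Set ℝ :=
  {x | ∃ y : Fin m → ℝ, euclNorm y = 1 ∧ x = euclNorm (Mᵀ *ᵥ y)}

lemma condNum_eq {m k : ℕ} (M : Matrix (Fin m) (Fin k) ℝ) :
    condNum M = sSup (unitSphereNorms M) / sInf (unitSphereNorms M) := rfl

lemma unitSphereNorms_mul_transpose {m k p : ℕ} (M : Matrix (Fin m) (Fin p) ℝ)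
    {W : Matrix (Fin k) (Fin p) ℝ} (hW : Wᵀ * W = 1) :
    unitSphereNorms (M * Wᵀ) = unitSphereNorms M := by
  simp only [unitSphereNorms, transpose_mul, transpose_transpose, ← mulVec_mulVec,
    euclNorm_mulVec_of_transpose_mul_self hW]

lemma condNum_mul_transpose {m k p : ℕ} (M : Matrix (Fin m) (Fin p) ℝ)
    {W : Matrix (Fin k) (Fin p) ℝ} (hW : Wᵀ * W = 1) : condNum (M * Wᵀ) = condNum M := by
  rw [condNum_eq, condNum_eq, unitSphereNorms_mul_transpose M hW]

section Square

variable {m : ℕ} {B : Matrix (Fin m) (Fin m) ℝ}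

lemma pos_of_mem_unitSphereNorms (hB : IsUnit B.det) {x : ℝ} (hx : x ∈ unitSphereNorms B) :
    0 < x := by
  obtain ⟨y, hy, rfl⟩ := hx
  have hy₀ : y ≠ 0 := by rintro rfl; simp [euclNorm] at hy
  have hinj : Function.Injective (Bᵀ *ᵥ ·) := mulVec_injective_iff_isUnit.mpr
    ((isUnit_iff_isUnit_det _).mpr (isUnit_det_transpose _ hB))
  have hBy : Bᵀ *ᵥ y ≠ 0 := fun h => hy₀ (hinj (h.trans (mulVec_zero _).symm))
  exact (euclNorm_nonneg _).lt_of_ne (Ne.symm (euclNorm_eq_zero.not.mpr hBy))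

lemma inv_unitSphereNorms_subset (hB : IsUnit B.det) :
    (unitSphereNorms B)⁻¹ ⊆ unitSphereNorms B⁻¹ := by
  intro x hx
  obtain ⟨y, hy, hxy⟩ := Set.mem_inv.mp hx
  have hx₀ : 0 < x := inv_pos.mp (pos_of_mem_unitSphereNorms hB hx)
  refine ⟨x • (Bᵀ *ᵥ y), ?_, ?_⟩
  · rw [euclNorm_smul, ← hxy, abs_of_pos hx₀, mul_inv_cancel₀ hx₀.ne']
  · rw [mulVec_smul, transpose_nonsing_inv, mulVec_mulVec, nonsing_inv_mul _
      (isUnit_det_transpose _ hB), one_mulVec, euclNorm_smul, hy, abs_of_pos hx₀, mul_one]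

lemma unitSphereNorms_inv (hB : IsUnit B.det) : unitSphereNorms B⁻¹ = (unitSphereNorms B)⁻¹ := by
  refine Set.Subset.antisymm ?_ (inv_unitSphereNorms_subset hB)
  have h := inv_unitSphereNorms_subset (isUnit_nonsing_inv_det _ hB)
  rwa [nonsing_inv_nonsing_inv _ hB, Set.inv_subset] at h

lemma condNum_inv (hB : IsUnit B.det) : condNum B⁻¹ = condNum B := by
  have hpos : ∀ x ∈ unitSphereNorms B, 0 < x := fun _ => pos_of_mem_unitSphereNorms hB
  have hpos_inv : ∀ x ∈ (unitSphereNorms B)⁻¹, 0 < x := fun x hx => inv_pos.mp (hpos _ hx)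
  have hsup : sSup (unitSphereNorms B) = (sInf (unitSphereNorms B)⁻¹)⁻¹ := by
    simpa only [inv_inv] using Real.sSup_inv_of_pos hpos_inv
  rw [condNum_eq, condNum_eq, unitSphereNorms_inv hB, Real.sSup_inv_of_pos hpos, hsup,
    div_eq_mul_inv, div_eq_mul_inv, mul_comm]

end Square

theorem stmt_8_general (l m n : ℕ) (A : Matrix (Fin m) (Fin n) ℝ)
    (U : Matrix (Fin m) (Fin m) ℝ) (S : Matrix (Fin m) (Fin m) ℝ)
    (V : Matrix (Fin n) (Fin m) ℝ) (hV : Vᵀ * V = 1)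
    (hSVD : A = U * S * Vᵀ)
    (G : Matrix (Fin n) (Fin l) ℝ) (hAG : (A * G).rank = m)
    (P : Matrix (Fin m) (Fin m) ℝ) (Q : Matrix (Fin l) (Fin m) ℝ)
    (hQ : Qᵀ * Q = 1) (hPQ : A * G = P * Qᵀ) :
    IsUnit P ∧ condNum (P⁻¹ * A) = condNum (Vᵀ * G) := by
  have hP : IsUnit P := isUnit_of_rank_eq <| le_antisymm (by simpa using rank_le_width P)
    (by simpa only [Fintype.card_fin, ← hPQ, hAG] using rank_mul_le_left P Qᵀ)
  set B := P⁻¹ * (U * S)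
  have hA : P⁻¹ * A = B * Vᵀ := by simp only [hSVD, B, Matrix.mul_assoc]
  have hBVG : B * (Vᵀ * G) = Qᵀ := by
    rw [← Matrix.mul_assoc, ← hA, Matrix.mul_assoc, hPQ,
      nonsing_inv_mul_cancel_left _ _ ((isUnit_iff_isUnit_det P).mp hP)]
  have hB : IsUnit B.det := isUnit_det_of_right_inverse (B := Vᵀ * G * Q) <| by
    rw [← Matrix.mul_assoc, hBVG, hQ]
  have hVG : Vᵀ * G = B⁻¹ * Qᵀ := by rw [← hBVG, nonsing_inv_mul_cancel_left _ _ hB]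
  refine ⟨hP, ?_⟩
  rw [hA, hVG, condNum_mul_transpose B hV, condNum_mul_transpose B⁻¹ hQ, condNum_inv hB]

/-- Let `A = U Σ Vᵀ` be an SVD of a full-rank real `m × n` matrix
(`0 < m ≤ l ≤ n`), and let `G` be a real `n × l` matrix with `A * G` of rank
`m`.  If `A * G = P * Qᵀ` with `Q` having orthonormal columns, then `P` is
invertible and the condition number of `P⁻¹ * A` equals that of `Vᵀ * G`. -/
theorem stmt_8 (l m n : ℕ) (hm : 0 < m) (hml : m ≤ l) (hln : l ≤ n)
    (A : Matrix (Fin m) (Fin n) ℝ) (hrank : A.rank = m)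
    (U : Matrix (Fin m) (Fin m) ℝ) (hU : Uᵀ * U = 1)
    (S : Matrix (Fin m) (Fin m) ℝ) (hSdiag : ∀ i j, i ≠ j → S i j = 0)
    (hSpos : ∀ i, 0 ≤ S i i)
    (V : Matrix (Fin n) (Fin m) ℝ) (hV : Vᵀ * V = 1)
    (hSVD : A = U * S * Vᵀ)
    (G : Matrix (Fin n) (Fin l) ℝ) (hAG : (A * G).rank = m)
    (P : Matrix (Fin m) (Fin m) ℝ) (Q : Matrix (Fin l) (Fin m) ℝ)
    (hQ : Qᵀ * Q = 1) (hPQ : A * G = P * Qᵀ) :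
    IsUnit P ∧ condNum (P⁻¹ * A) = condNum (Vᵀ * G) :=
  stmt_8_general l m n A U S V hV hSVD G hAG P Q hQ hPQ
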